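/- arXiv:1312.1579 — 2 statements merged into one kernel-verified Lean document; each statement's English description precedes it below -/
import Mathlib

section
/- The modulational instability index Γ has a zero z_c in the interval (1.1, 1.2); in particular Γ(1.1) > 0 and Γ(1.2) < 0. -/
/-- The Whitham dispersion symbol `α(ξ) = √(tanh ξ / ξ)` for `ξ ≠ 0`, with `α(0) = 1`. -/
noncomputable def whithamSymbol (ξ : ℝ) : ℝ :=
  if ξ = 0 then 1 else Real.sqrt (Real.tanh ξ / ξ)

/-- The modulational instability index `Γ(z) = 3α(z) − 2α(2z) − 1 + z·α'(z)`. -/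
noncomputable def modulationalIndex (z : ℝ) : ℝ :=
  3 * whithamSymbol z - 2 * whithamSymbol (2 * z) - 1 + z * deriv whithamSymbol z

/-! ### Auxiliary lemmas -/

lemma tanh_hasDerivAt' (x : ℝ) : HasDerivAt Real.tanh (1 - Real.tanh x ^ 2) x := by
  have hc : Real.cosh x ≠ 0 := (Real.cosh_pos x).ne'
  have h3 : HasDerivAt (fun y => Real.sinh y / Real.cosh y) _ x :=
    (Real.hasDerivAt_sinh x).div (Real.hasDerivAt_cosh x) hc
  have he : Real.tanh = fun y => Real.sinh y / Real.cosh y :=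
    funext fun y => Real.tanh_eq_sinh_div_cosh y
  rw [he]
  convert h3 using 1
  have hid := Real.cosh_sq_sub_sinh_sq x
  simp only []
  field_simp

lemma tanh_pos'' {x : ℝ} (hx : 0 < x) : 0 < Real.tanh x := by
  rw [Real.tanh_eq_sinh_div_cosh]
  exact div_pos (Real.sinh_pos_iff.2 hx) (Real.cosh_pos x)

lemma tanh_continuous' : Continuous Real.tanh := by
  have he : Real.tanh = fun y => Real.sinh y / Real.cosh y :=
    funext fun y => Real.tanh_eq_sinh_div_cosh y
  rw [he]
  exact Real.continuous_sinh.div Real.continuous_cosh fun x => (Real.cosh_pos x).ne'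

lemma whitham_pos_eq {z : ℝ} (hz : 0 < z) :
    whithamSymbol z = Real.sqrt (Real.tanh z / z) := by
  rw [whithamSymbol, if_neg hz.ne']

lemma whitham_hasDerivAt {z : ℝ} (hz : 0 < z) :
    HasDerivAt whithamSymbol
      (((1 - Real.tanh z ^ 2) * z - Real.tanh z * 1) / z ^ 2 /
        (2 * Real.sqrt (Real.tanh z / z))) z := by
  have hq : Real.tanh z / z ≠ 0 := (div_pos (tanh_pos'' hz) hz).ne'
  have h1 : HasDerivAt (fun ξ => Real.tanh ξ / ξ)
      (((1 - Real.tanh z ^ 2) * z - Real.tanh z * 1) / z ^ 2) z :=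
    (tanh_hasDerivAt' z).div (hasDerivAt_id z) hz.ne'
  have h2 := h1.sqrt hq
  apply h2.congr_of_eventuallyEq
  filter_upwards [Ioi_mem_nhds hz] with ξ hξ
  rw [whitham_pos_eq hξ]

/-- Explicit formula for the modulational index on `z > 0`. -/
noncomputable def gammaFun (z : ℝ) : ℝ :=
  3 * Real.sqrt (Real.tanh z / z) - 2 * Real.sqrt (Real.tanh (2 * z) / (2 * z)) - 1 +
    z * (((1 - Real.tanh z ^ 2) * z - Real.tanh z * 1) / z ^ 2 /
      (2 * Real.sqrt (Real.tanh z / z)))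

lemma gamma_eq {z : ℝ} (hz : 0 < z) : modulationalIndex z = gammaFun z := by
  rw [modulationalIndex, gammaFun, (whitham_hasDerivAt hz).deriv, whitham_pos_eq hz,
    whitham_pos_eq (by linarith : (0:ℝ) < 2 * z)]

lemma gamma_cont : ContinuousOn gammaFun (Set.Icc (1.1:ℝ) 1.2) := by
  have hzp : ∀ z ∈ Set.Icc (1.1:ℝ) 1.2, 0 < z := fun z hz => by
    have := hz.1; norm_num at this ⊢; linarith
  have hzn : ∀ z ∈ Set.Icc (1.1:ℝ) 1.2, z ≠ 0 := fun z hz => (hzp z hz).ne'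
  have h2zn : ∀ z ∈ Set.Icc (1.1:ℝ) 1.2, 2 * z ≠ 0 := fun z hz => by
    have := hzp z hz; positivity
  have c1 : ContinuousOn (fun z => Real.tanh z / z) (Set.Icc (1.1:ℝ) 1.2) :=
    tanh_continuous'.continuousOn.div continuousOn_id hzn
  have cs1 : ContinuousOn (fun z => Real.sqrt (Real.tanh z / z)) (Set.Icc (1.1:ℝ) 1.2) :=
    Real.continuous_sqrt.comp_continuousOn c1
  have c2 : ContinuousOn (fun z => Real.tanh (2 * z) / (2 * z)) (Set.Icc (1.1:ℝ) 1.2) :=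
    (tanh_continuous'.comp (continuous_const.mul continuous_id)).continuousOn.div
      (continuous_const.mul continuous_id).continuousOn h2zn
  have cs2 : ContinuousOn (fun z => Real.sqrt (Real.tanh (2 * z) / (2 * z)))
      (Set.Icc (1.1:ℝ) 1.2) := Real.continuous_sqrt.comp_continuousOn c2
  have cnum : ContinuousOn (fun z => ((1 - Real.tanh z ^ 2) * z - Real.tanh z * 1) / z ^ 2)
      (Set.Icc (1.1:ℝ) 1.2) :=
    (((continuous_const.sub (tanh_continuous'.pow 2)).mul continuous_id).sub
      (tanh_continuous'.mul continuous_const)).continuousOn.div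
      (continuous_pow 2).continuousOn (fun z hz => pow_ne_zero 2 (hzn z hz))
  have cden : ∀ z ∈ Set.Icc (1.1:ℝ) 1.2, 2 * Real.sqrt (Real.tanh z / z) ≠ 0 := by
    intro z hz
    have hp := hzp z hz
    have : 0 < Real.sqrt (Real.tanh z / z) :=
      Real.sqrt_pos.2 (div_pos (tanh_pos'' hp) hp)
    positivity
  unfold gammaFun
  exact ((((continuousOn_const.mul cs1).sub (continuousOn_const.mul cs2)).sub
    continuousOn_const).add (continuousOn_id.mul (cnum.div
    (continuousOn_const.mul cs1) cden)))

/-! ### Numerical bounds -/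

lemma tanh_exp_eq (x : ℝ) : Real.tanh x = (Real.exp (2*x) - 1) / (Real.exp (2*x) + 1) := by
  have h := Real.exp_pos x
  have h2 : Real.exp x + (Real.exp x)⁻¹ ≠ 0 := by positivity
  have h3 : Real.exp x * Real.exp x + 1 ≠ 0 := by positivity
  rw [Real.tanh_eq_sinh_div_cosh, Real.sinh_eq, Real.cosh_eq,
    show (2:ℝ)*x = x + x by ring, Real.exp_add, Real.exp_neg]
  field_simp

lemma exp01_bounds : (1.1051614:ℝ) ≤ Real.exp 0.1 ∧ Real.exp 0.1 ≤ 1.1051719 := by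
  have h := Real.exp_bound (x := 0.1) (by rw [abs_of_pos] <;> norm_num) (n := 4) (by norm_num)
  simp [Finset.sum_range_succ, Nat.factorial] at h
  rw [abs_le] at h
  rw [abs_of_pos (by norm_num : (0:ℝ) < 0.1)] at h
  constructor <;> nlinarith [h.1, h.2]

lemma exp02_bounds : (1.2214025:ℝ) ≤ Real.exp 0.2 ∧ Real.exp 0.2 ≤ 1.2214028 := by
  have h := Real.exp_bound (x := 0.2) (by rw [abs_of_pos] <;> norm_num) (n := 6) (by norm_num)
  simp [Finset.sum_range_succ, Nat.factorial] at h
  rw [abs_le] at h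
  rw [abs_of_pos (by norm_num : (0:ℝ) < 0.2)] at h
  constructor <;> nlinarith [h.1, h.2]

lemma exp22_bounds : (9.0248570:ℝ) ≤ Real.exp 2.2 ∧ Real.exp 2.2 ≤ 9.0250320 := by
  have hE : Real.exp 2.2 = (Real.exp 1 * Real.exp 0.1)^2 := by
    rw [← Real.exp_add, sq, ← Real.exp_add]; norm_num
  have h1 := Real.exp_one_gt_d9
  have h2 := Real.exp_one_lt_d9
  have h3 := exp01_bounds
  have hp := Real.exp_pos (1:ℝ)
  have hp2 := Real.exp_pos (0.1:ℝ)
  have habl : (3.0041401:ℝ) ≤ Real.exp 1 * Real.exp 0.1 := by nlinarith [h3.1, h3.2]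
  have habu : Real.exp 1 * Real.exp 0.1 ≤ 3.0041690 := by nlinarith [h3.1, h3.2]
  constructor <;> rw [hE] <;> nlinarith [habl, habu]

lemma exp44_bounds : (81.448043:ℝ) ≤ Real.exp 4.4 ∧ Real.exp 4.4 ≤ 81.451206 := by
  have hE : Real.exp 4.4 = (Real.exp 2.2)^2 := by rw [sq, ← Real.exp_add]; norm_num
  have h := exp22_bounds
  constructor <;> rw [hE] <;> nlinarith [h.1, h.2]

lemma exp24_bounds : (11.023170:ℝ) ≤ Real.exp 2.4 ∧ Real.exp 2.4 ≤ 11.023179 := by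
  have hE : Real.exp 2.4 = (Real.exp 1 * Real.exp 0.2)^2 := by
    rw [← Real.exp_add, sq, ← Real.exp_add]; norm_num
  have h1 := Real.exp_one_gt_d9
  have h2 := Real.exp_one_lt_d9
  have h3 := exp02_bounds
  have hp := Real.exp_pos (1:ℝ)
  have hp2 := Real.exp_pos (0.2:ℝ)
  have habl : (3.3201160:ℝ) ≤ Real.exp 1 * Real.exp 0.2 := by nlinarith [h3.1, h3.2]
  have habu : Real.exp 1 * Real.exp 0.2 ≤ 3.3201173 := by nlinarith [h3.1, h3.2]
  constructor <;> rw [hE] <;> nlinarith [habl, habu]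

lemma exp48_bounds : (121.510276:ℝ) ≤ Real.exp 4.8 ∧ Real.exp 4.8 ≤ 121.510476 := by
  have hE : Real.exp 4.8 = (Real.exp 2.4)^2 := by rw [sq, ← Real.exp_add]; norm_num
  have h := exp24_bounds
  constructor <;> rw [hE] <;> nlinarith [h.1, h.2]

lemma tanh_bounds_of_exp {x El Eu cl cu : ℝ} (hl : El ≤ Real.exp (2*x)) (hu : Real.exp (2*x) ≤ Eu)
    (hE : (0:ℝ) < El) (h1 : cl * (El + 1) ≤ El - 1) (h2 : Eu - 1 ≤ cu * (Eu + 1)) (hc : cu ≤ 1) :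
    cl ≤ Real.tanh x ∧ Real.tanh x ≤ cu := by
  have hpos : (0:ℝ) < Real.exp (2*x) + 1 := by positivity
  rw [tanh_exp_eq]
  constructor
  · rw [le_div_iff₀ hpos]; nlinarith
  · rw [div_le_iff₀ hpos]; nlinarith

lemma tanh11_bounds : (0.800495:ℝ) ≤ Real.tanh 1.1 ∧ Real.tanh 1.1 ≤ 0.800503 := by
  have h := exp22_bounds
  exact tanh_bounds_of_exp (x := 1.1) (El := 9.0248570) (Eu := 9.0250320)
    (cl := 0.800495) (cu := 0.800503)
    (by rw [show (2:ℝ)*1.1 = 2.2 by norm_num]; exact h.1)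
    (by rw [show (2:ℝ)*1.1 = 2.2 by norm_num]; exact h.2)
    (by norm_num) (by norm_num) (by norm_num) (by norm_num)

lemma tanh22_bounds : (0.975742:ℝ) ≤ Real.tanh 2.2 ∧ Real.tanh 2.2 ≤ 0.975744 := by
  have h := exp44_bounds
  exact tanh_bounds_of_exp (x := 2.2) (El := 81.448043) (Eu := 81.451206)
    (cl := 0.975742) (cu := 0.975744)
    (by rw [show (2:ℝ)*2.2 = 4.4 by norm_num]; exact h.1)
    (by rw [show (2:ℝ)*2.2 = 4.4 by norm_num]; exact h.2)
    (by norm_num) (by norm_num) (by norm_num) (by norm_num)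

lemma tanh12_bounds : (0.833654:ℝ) ≤ Real.tanh 1.2 ∧ Real.tanh 1.2 ≤ 0.833655 := by
  have h := exp24_bounds
  exact tanh_bounds_of_exp (x := 1.2) (El := 11.023170) (Eu := 11.023179)
    (cl := 0.833654) (cu := 0.833655)
    (by rw [show (2:ℝ)*1.2 = 2.4 by norm_num]; exact h.1)
    (by rw [show (2:ℝ)*1.2 = 2.4 by norm_num]; exact h.2)
    (by norm_num) (by norm_num) (by norm_num) (by norm_num)

lemma tanh24_bounds : (0.983674:ℝ) ≤ Real.tanh 2.4 ∧ Real.tanh 2.4 ≤ 0.983675 := by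
  have h := exp48_bounds
  exact tanh_bounds_of_exp (x := 2.4) (El := 121.510276) (Eu := 121.510476)
    (cl := 0.983674) (cu := 0.983675)
    (by rw [show (2:ℝ)*2.4 = 4.8 by norm_num]; exact h.1)
    (by rw [show (2:ℝ)*2.4 = 4.8 by norm_num]; exact h.2)
    (by norm_num) (by norm_num) (by norm_num) (by norm_num)

lemma sqrt_lb {c x : ℝ} (hc : 0 ≤ c) (h : c ^ 2 ≤ x) : c ≤ Real.sqrt x := by
  rw [show c = Real.sqrt (c ^ 2) from (Real.sqrt_sq hc).symm]
  exact Real.sqrt_le_sqrt h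

lemma sqrt_ub {c x : ℝ} (hc : 0 ≤ c) (h : x ≤ c ^ 2) : Real.sqrt x ≤ c := by
  rw [show c = Real.sqrt (c ^ 2) from (Real.sqrt_sq hc).symm]
  exact Real.sqrt_le_sqrt h

/-! ### Sign of Γ at the endpoints -/

lemma gamma11_pos : 0 < gammaFun 1.1 := by
  have ht := tanh11_bounds
  have hT := tanh22_bounds
  unfold gammaFun
  rw [show (2:ℝ) * 1.1 = 2.2 by norm_num]
  set t := Real.tanh 1.1 with htdef
  set s := Real.sqrt (t / 1.1) with hsdef
  set S := Real.sqrt (Real.tanh 2.2 / 2.2) with hSdef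
  have hsl : (0.853066:ℝ) ≤ s := by
    apply sqrt_lb (by norm_num)
    rw [le_div_iff₀ (by norm_num : (0:ℝ) < 1.1)]; nlinarith [ht.1]
  have hsu : s ≤ 0.853071 := by
    apply sqrt_ub (by norm_num)
    rw [div_le_iff₀ (by norm_num : (0:ℝ) < 1.1)]; nlinarith [ht.2]
  have hSu : S ≤ 0.665973 := by
    apply sqrt_ub (by norm_num)
    rw [div_le_iff₀ (by norm_num : (0:ℝ) < 2.2)]; nlinarith [hT.2]
  have hS0 : 0 ≤ S := Real.sqrt_nonneg _
  have hkey : 0 < (3*s - 2*S - 1) * (2.2*s) + ((1-t^2)*1.1 - t*1) := by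
    nlinarith [mul_nonneg (sub_nonneg.2 hsl) (sub_nonneg.2 hSu), sq_nonneg (s - 0.853066),
      mul_nonneg (sub_nonneg.2 ht.1) (sub_nonneg.2 ht.2)]
  have hs0 : (0:ℝ) < s := by linarith
  have heq : 3*s - 2*S - 1 + 1.1 * (((1-t^2)*1.1 - t*1)/1.1^2/(2*s))
      = ((3*s - 2*S - 1) * (2.2*s) + ((1-t^2)*1.1 - t*1)) / (2.2*s) := by
    field_simp
    ring
  rw [heq]
  exact div_pos hkey (by linarith)

lemma gamma12_neg : gammaFun 1.2 < 0 := by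
  have ht := tanh12_bounds
  have hT := tanh24_bounds
  unfold gammaFun
  rw [show (2:ℝ) * 1.2 = 2.4 by norm_num]
  set t := Real.tanh 1.2 with htdef
  set s := Real.sqrt (t / 1.2) with hsdef
  set S := Real.sqrt (Real.tanh 2.4 / 2.4) with hSdef
  have hsl : (0.833493:ℝ) ≤ s := by
    apply sqrt_lb (by norm_num)
    rw [le_div_iff₀ (by norm_num : (0:ℝ) < 1.2)]; nlinarith [ht.1]
  have hsu : s ≤ 0.833498 := by
    apply sqrt_ub (by norm_num)
    rw [div_le_iff₀ (by norm_num : (0:ℝ) < 1.2)]; nlinarith [ht.2]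
  have hSl : (0.640206:ℝ) ≤ S := by
    apply sqrt_lb (by norm_num)
    rw [le_div_iff₀ (by norm_num : (0:ℝ) < 2.4)]; nlinarith [hT.1]
  have hs0 : (0:ℝ) ≤ s := by linarith
  have hkey : (3*s - 2*S - 1) * (2.4*s) + ((1-t^2)*1.2 - t*1) < 0 := by
    nlinarith [mul_nonneg (sub_nonneg.2 hSl) hs0, sq_nonneg (s - 0.833498),
      mul_nonneg (sub_nonneg.2 ht.1) (sub_nonneg.2 ht.2)]
  have hs0' : (0:ℝ) < s := by linarith
  have heq : 3*s - 2*S - 1 + 1.2 * (((1-t^2)*1.2 - t*1)/1.2^2/(2*s))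
      = ((3*s - 2*S - 1) * (2.4*s) + ((1-t^2)*1.2 - t*1)) / (2.4*s) := by
    field_simp
    ring
  rw [heq]
  exact div_neg_of_neg_of_pos hkey (by linarith)

theorem modulationalIndex_root :
    (∃ zc ∈ Set.Ioo (1.1 : ℝ) 1.2, modulationalIndex zc = 0) ∧
    0 < modulationalIndex 1.1 ∧ modulationalIndex 1.2 < 0 := by
  have h11 : 0 < modulationalIndex 1.1 := by
    rw [gamma_eq (by norm_num)]; exact gamma11_pos
  have h12 : modulationalIndex 1.2 < 0 := by
    rw [gamma_eq (by norm_num)]; exact gamma12_neg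
  refine ⟨?_, h11, h12⟩
  have hsub := intermediate_value_Ioo' (a := (1.1:ℝ)) (b := 1.2) (by norm_num) gamma_cont
  have h0 : (0:ℝ) ∈ Set.Ioo (gammaFun 1.2) (gammaFun 1.1) := ⟨gamma12_neg, gamma11_pos⟩
  obtain ⟨zc, hzc, hz0⟩ := hsub h0
  refine ⟨zc, hzc, ?_⟩
  have hzcpos : (0:ℝ) < zc := by
    have := hzc.1; norm_num at this ⊢; linarith
  rw [gamma_eq hzcpos]
  exact hz0
end

section
/- Fix κ > 0 and τ ∈ (0, 1/2], and for n ∈ ℤ set ω_{n,τ} = (n+τ)·(α(κ) − α(κ(n+τ))). Then ω_{0,τ} < 0, ω_{1,τ} > 0 and ω_{−1,τ} > 0. -/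
lemma tanh_div_strictAnti : StrictAntiOn (fun x => Real.tanh x / x) (Set.Ioi 0) := by
  have key : StrictAntiOn (fun x => Real.sinh x / (x * Real.cosh x)) (Set.Ioi 0) := by
    apply strictAntiOn_of_deriv_neg (convex_Ioi 0)
    · apply ContinuousOn.div (Real.continuous_sinh.continuousOn)
        (continuousOn_id.mul Real.continuous_cosh.continuousOn)
      intro x hx
      have hx0 : (0:ℝ) < x := hx
      exact mul_ne_zero hx0.ne' (Real.cosh_pos x).ne'
    · intro x hx
      rw [interior_Ioi] at hx
      have hx0 : (0:ℝ) < x := hx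
      have hne : x * Real.cosh x ≠ 0 := by positivity
      have hd : HasDerivAt (fun x => Real.sinh x / (x * Real.cosh x))
          ((Real.cosh x * (x * Real.cosh x) -
            Real.sinh x * (1 * Real.cosh x + x * Real.sinh x)) / (x * Real.cosh x) ^ 2) x :=
        (Real.hasDerivAt_sinh x).div ((hasDerivAt_id x).mul (Real.hasDerivAt_cosh x)) hne
      rw [hd.deriv]
      apply div_neg_of_neg_of_pos _ (by positivity)
      have h1 : x < Real.sinh x := Real.self_lt_sinh_iff.2 hx0
      have h2 : 1 ≤ Real.cosh x := Real.one_le_cosh x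
      have h3 : Real.cosh x ^ 2 - Real.sinh x ^ 2 = 1 := Real.cosh_sq_sub_sinh_sq x
      nlinarith [Real.sinh_pos_iff.2 hx0]
  intro x hx y hy hxy
  have hx0 : (0:ℝ) < x := hx
  have hy0 : (0:ℝ) < y := hy
  have := key hx hy hxy
  simpa [Real.tanh_eq_sinh_div_cosh, div_div, mul_comm] using this

lemma whitham_lt (x y : ℝ) (hx : 0 < x) (hxy : x < y) :
    whithamSymbol y < whithamSymbol x := by
  have hy : 0 < y := hx.trans hxy
  rw [whithamSymbol, whithamSymbol, if_neg hx.ne', if_neg hy.ne']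
  apply Real.sqrt_lt_sqrt
  · have : 0 < Real.tanh y := by
      rw [Real.tanh_eq_sinh_div_cosh]
      exact div_pos (Real.sinh_pos_iff.2 hy) (Real.cosh_pos y)
    positivity
  · exact tanh_div_strictAnti hx (Set.mem_Ioi.2 hy) hxy

lemma whitham_even (x : ℝ) : whithamSymbol (-x) = whithamSymbol x := by
  rcases eq_or_ne x 0 with h | h
  · simp [h]
  · rw [whithamSymbol, whithamSymbol, if_neg (neg_ne_zero.2 h), if_neg h, Real.tanh_neg,
      neg_div_neg_eq]

theorem bloch_eigenvalues_tau_pos (κ τ : ℝ) (hκ : 0 < κ) (hτ : τ ∈ Set.Ioc (0 : ℝ) (1 / 2))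
    (ω : ℤ → ℝ)
    (hω : ∀ n : ℤ,
      ω n = ((n : ℝ) + τ) * (whithamSymbol κ - whithamSymbol (κ * ((n : ℝ) + τ)))) :
    ω 0 < 0 ∧ 0 < ω 1 ∧ 0 < ω (-1) := by
  obtain ⟨hτ0, hτ2⟩ := hτ
  refine ⟨?_, ?_, ?_⟩
  · rw [hω 0]
    have h : whithamSymbol κ < whithamSymbol (κ * (0 + τ)) := by
      apply whitham_lt _ _ (by positivity)
      nlinarith
    push_cast
    nlinarith
  · rw [hω 1]
    have h : whithamSymbol (κ * (1 + τ)) < whithamSymbol κ := by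
      apply whitham_lt _ _ hκ
      nlinarith
    push_cast
    nlinarith
  · rw [hω (-1)]
    have he : whithamSymbol (κ * ((-1) + τ)) = whithamSymbol (κ * (1 - τ)) := by
      rw [← whitham_even (κ * (1 - τ))]; ring_nf
    have h : whithamSymbol κ < whithamSymbol (κ * (1 - τ)) := by
      apply whitham_lt _ _ (by nlinarith)
      nlinarith
    push_cast
    rw [he]
    nlinarith
end
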